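/- arXiv:2602.20280 — 2 statements merged into one kernel-verified Lean document; each statement's English description precedes it below -/
import Mathlib

section
/- Let p, q, r be pairwise coprime positive integers such that (p+q+r)^2 = 9·p·q·r. Then there exist positive integers a, b, c with p = a^2, q = b^2, r = c^2 and a^2 + b^2 + c^2 = 3abc (i.e. (a,b,c) is a Markov triple). -/
lemma sq_aux (x y : ℕ) (hxy : Nat.Coprime x y) {s : ℕ} (heq : x * y = s ^ 2) :
    ∃ a, x = a ^ 2 :=
  exists_eq_pow_of_mul_eq_pow (isUnit_of_dvd_one (by change Nat.gcd x y ∣ 1; rw [hxy])) heq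

lemma aux1 (x y z s : ℕ) (h3 : ¬ 3 ∣ x) (hxy : Nat.Coprime x y) (hxz : Nat.Coprime x z)
    (heq : x * (9 * y * z) = s ^ 2) : ∃ a, x = a ^ 2 := by
  have h9 : Nat.Coprime x 9 := by
    have : Nat.Coprime x 3 := (Nat.coprime_comm.mp ((Nat.Prime.coprime_iff_not_dvd (by norm_num)).mpr h3))
    have : Nat.Coprime x (3 ^ 2) := this.pow_right 2
    simpa using this
  exact sq_aux x _ ((h9.mul_right hxy).mul_right hxz) heq

lemma aux2 (x y z s : ℕ) (h3y : ¬ 3 ∣ y) (h3z : ¬ 3 ∣ z)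
    (hxy : Nat.Coprime x y) (hxz : Nat.Coprime x z)
    (heq : (9 * x) * (y * z) = s ^ 2) : ∃ a, x = a ^ 2 := by
  have h9y : Nat.Coprime 9 y := by
    have : Nat.Coprime 3 y := (Nat.Prime.coprime_iff_not_dvd (by norm_num)).mpr h3y
    simpa using (Nat.Coprime.pow_left 2 this : Nat.Coprime (3 ^ 2) y)
  have h9z : Nat.Coprime 9 z := by
    have : Nat.Coprime 3 z := (Nat.Prime.coprime_iff_not_dvd (by norm_num)).mpr h3z
    simpa using (Nat.Coprime.pow_left 2 this : Nat.Coprime (3 ^ 2) z)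
  obtain ⟨t, ht⟩ := sq_aux (9 * x) (y * z) (Nat.Coprime.mul (h9y.mul_right h9z) (hxy.mul_right hxz)) heq
  have h3t : 3 ∣ t := by
    have : (3 : ℕ) ∣ t ^ 2 := ⟨3 * x, by omega⟩
    exact (Nat.Prime.dvd_of_dvd_pow (by norm_num) this)
  obtain ⟨u, hu⟩ := h3t
  refine ⟨u, ?_⟩
  have : 9 * x = 9 * u ^ 2 := by rw [ht, hu]; ring
  omega

/-- If `p, q, r` are pairwise coprime positive integers with `(p+q+r)^2 = 9·p·q·r`,
then `(p,q,r) = (a²,b²,c²)` for a Markov triple `(a,b,c)`. -/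
theorem markov_of_wps_volume_nine (p q r : ℕ)
    (hp : 0 < p) (hq : 0 < q) (hr : 0 < r)
    (hpq : Nat.gcd p q = 1) (hqr : Nat.gcd q r = 1) (hpr : Nat.gcd p r = 1)
    (hvol : (p + q + r) ^ 2 = 9 * p * q * r) :
    ∃ a b c : ℕ, 0 < a ∧ 0 < b ∧ 0 < c ∧
      p = a ^ 2 ∧ q = b ^ 2 ∧ r = c ^ 2 ∧
      a ^ 2 + b ^ 2 + c ^ 2 = 3 * a * b * c := by
  have hqp : Nat.gcd q p = 1 := Nat.gcd_comm p q ▸ hpq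
  have hrp : Nat.gcd r p = 1 := Nat.gcd_comm p r ▸ hpr
  have hrq : Nat.gcd r q = 1 := Nat.gcd_comm q r ▸ hqr
  -- squares
  have hpsq : ∃ a, p = a ^ 2 := by
    by_cases h3 : 3 ∣ p
    · have h3q : ¬ 3 ∣ q := fun h => by
        have : (3:ℕ) ∣ Nat.gcd p q := Nat.dvd_gcd h3 h
        omega
      have h3r : ¬ 3 ∣ r := fun h => by
        have : (3:ℕ) ∣ Nat.gcd p r := Nat.dvd_gcd h3 h
        omega
      exact aux2 p q r (p+q+r) h3q h3r hpq hpr (by rw [hvol]; ring)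
    · exact aux1 p q r (p+q+r) h3 hpq hpr (by rw [hvol]; ring)
  have hqsq : ∃ b, q = b ^ 2 := by
    by_cases h3 : 3 ∣ q
    · have h3p : ¬ 3 ∣ p := fun h => by
        have : (3:ℕ) ∣ Nat.gcd p q := Nat.dvd_gcd h h3
        omega
      have h3r : ¬ 3 ∣ r := fun h => by
        have : (3:ℕ) ∣ Nat.gcd q r := Nat.dvd_gcd h3 h
        omega
      exact aux2 q p r (p+q+r) h3p h3r hqp hqr (by rw [hvol]; ring)
    · exact aux1 q p r (p+q+r) h3 hqp hqr (by rw [hvol]; ring)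
  have hrsq : ∃ c, r = c ^ 2 := by
    by_cases h3 : 3 ∣ r
    · have h3p : ¬ 3 ∣ p := fun h => by
        have : (3:ℕ) ∣ Nat.gcd p r := Nat.dvd_gcd h h3
        omega
      have h3q : ¬ 3 ∣ q := fun h => by
        have : (3:ℕ) ∣ Nat.gcd q r := Nat.dvd_gcd h h3
        omega
      exact aux2 r p q (p+q+r) h3p h3q hrp hrq (by rw [hvol]; ring)
    · exact aux1 r p q (p+q+r) h3 hrp hrq (by rw [hvol]; ring)
  obtain ⟨a, ha⟩ := hpsq
  obtain ⟨b, hb⟩ := hqsq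
  obtain ⟨c, hc⟩ := hrsq

  refine ⟨a, b, c, ?_, ?_, ?_, ha, hb, hc, ?_⟩
  · nlinarith [ha, hp]
  · nlinarith [hb, hq]
  · nlinarith [hc, hr]
  · have key : (a ^ 2 + b ^ 2 + c ^ 2) ^ 2 = (3 * a * b * c) ^ 2 := by
      subst ha hb hc; rw [hvol]; ring
    exact Nat.pow_left_injective (by norm_num) key
end

section
/- Define a relation R on triples of positive integers by: (a,b,c) R (a',b',c') if and only if (a',b',c') is a permutation of (a,b,c) or (a',b',c') = (a, b, 3ab − c). Then every triple (a,b,c) of positive integers satisfying a^2 + b^2 + c^2 = 3abc is reachable from (1,1,1) by finitely many steps of R, i.e. the pair ((1,1,1), (a,b,c)) lies in the reflexive–transitive closure of R. -/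
/-- One step of the Markov relation: permute the entries of a triple, or perform
the mutation `(a, b, c) ↦ (a, b, 3ab − c)` in the last entry. -/
def MarkovStep (t t' : ℕ × ℕ × ℕ) : Prop :=
  List.Perm [t.1, t.2.1, t.2.2] [t'.1, t'.2.1, t'.2.2] ∨
    t' = (t.1, t.2.1, 3 * t.1 * t.2.1 - t.2.2)

private lemma swap12 (x y z : ℕ) : List.Perm [x, y, z] [y, x, z] :=
  List.Perm.swap y x [z]

private lemma swap23 (x y z : ℕ) : List.Perm [x, y, z] [x, z, y] :=
  List.Perm.cons x (List.Perm.swap z y [])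

private lemma permStep {x y z a b c : ℕ} (h : List.Perm [x, y, z] [a, b, c]) :
    MarkovStep (x, y, z) (a, b, c) := Or.inl h

set_option maxHeartbeats 1000000 in
private lemma markov_aux : ∀ c : ℕ, ∀ a b : ℕ, 0 < a → 0 < b → 0 < c → a ≤ b → b ≤ c →
    a ^ 2 + b ^ 2 + c ^ 2 = 3 * a * b * c →
    Relation.ReflTransGen MarkovStep (1, 1, 1) (a, b, c) := by
  intro c
  induction c using Nat.strong_induction_on with
  | _ c ih =>
    intro a b ha hb hc hab hbc h
    by_cases hb1 : b = 1
    · have ha1 : a = 1 := le_antisymm (hb1 ▸ hab) ha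
      subst ha1; subst hb1
      have hc3 : c < 3 := by nlinarith
      interval_cases c
      · exact Relation.ReflTransGen.refl
      · exact Relation.ReflTransGen.single (Or.inr (by norm_num))
    · have hb2 : 2 ≤ b := by omega
      have hc3ab : c ≤ 3 * a * b := by nlinarith
      obtain ⟨c', hc'def⟩ : ∃ c', c' = 3 * a * b - c := ⟨_, rfl⟩
      have hsum : c' + c = 3 * a * b := by omega
      have hcc' : c' * c = a ^ 2 + b ^ 2 := by nlinarith
      have hc'pos : 0 < c' := by
        rcases Nat.eq_zero_or_pos c' with h0 | h0
        · rw [h0] at hcc'; nlinarith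
        · exact h0
      have hf : a ^ 2 + 2 * b ^ 2 < 3 * a * b ^ 2 := by
        rcases Nat.lt_or_ge a 2 with ha1 | ha2
        · have : a = 1 := by omega
          subst this; nlinarith
        · nlinarith [Nat.mul_le_mul hab hab]
      have hbc' : b < c := by
        rcases Nat.lt_or_ge b c with h' | h'
        · exact h'
        · have : b = c := le_antisymm hbc h'
          subst this; nlinarith
      have hc'b : c' < b := by
        by_contra h'
        push_neg at h'
        have h1 : b * b ≤ c' * c := Nat.mul_le_mul h' (le_of_lt hbc')
        nlinarith [h1, hcc', hf]
      have heq' : a ^ 2 + b ^ 2 + c' ^ 2 = 3 * a * b * c' := by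
        have h1 : 3 * a * b * c' = (c' + c) * c' := by rw [hsum]
        have h2 : (c' + c) * c' = c' ^ 2 + c' * c := by ring
        rw [h1, h2, hcc']; ring
      have hback : 3 * a * b - c' = c := by omega
      have hmut : MarkovStep (a, b, c') (a, b, c) := Or.inr (by simp [hback])
      rcases Nat.le_total c' a with hca | hac
      · have hreach := ih b hbc' c' a hc'pos ha hb hca hab (by rw [show 3*c'*a*b = 3*a*b*c' by ring]; linarith)
        have hperm : MarkovStep (c', a, b) (a, b, c') :=
          permStep ((swap12 c' a b).trans (swap23 a c' b))
        exact ((hreach.tail hperm).tail hmut)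
      · have hreach := ih b hbc' a c' ha hc'pos hb hac (le_of_lt hc'b)
          (by rw [show 3*a*c'*b = 3*a*b*c' by ring]; linarith)
        have hperm : MarkovStep (a, c', b) (a, b, c') := permStep (swap23 a c' b)
        exact ((hreach.tail hperm).tail hmut)


/-- Every Markov triple of positive integers is reachable from `(1,1,1)` by finitely
many permutations and mutations. -/
theorem markov_tree_reaches_all (a b c : ℕ) (ha : 0 < a) (hb : 0 < b) (hc : 0 < c)
    (h : a ^ 2 + b ^ 2 + c ^ 2 = 3 * a * b * c) :
    Relation.ReflTransGen MarkovStep (1, 1, 1) (a, b, c) := by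
  rcases Nat.le_total a b with hab | hba
  · rcases Nat.le_total b c with hbc | hcb
    · exact markov_aux c a b ha hb hc hab hbc h
    · rcases Nat.le_total a c with hac | hca
      · -- order a ≤ c ≤ b
        have := markov_aux b a c ha hc hb hac hcb (by ring_nf; ring_nf at h; linarith)
        exact this.tail (permStep (swap23 a c b))
      · -- order c ≤ a ≤ b
        have := markov_aux b c a hc ha hb hca hab (by ring_nf; ring_nf at h; linarith)
        exact this.tail (permStep ((swap12 c a b).trans (swap23 a c b)))
  · rcases Nat.le_total a c with hac | hca
    · -- b ≤ a ≤ c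
      have := markov_aux c b a hb ha hc hba hac (by ring_nf; ring_nf at h; linarith)
      exact this.tail (permStep (swap12 b a c))
    · rcases Nat.le_total b c with hbc | hcb
      · -- b ≤ c ≤ a
        have := markov_aux a b c hb hc ha hbc hca (by ring_nf; ring_nf at h; linarith)
        exact this.tail (permStep ((swap23 b c a).trans (swap12 b a c)))
      · -- c ≤ b ≤ a
        have := markov_aux a c b hc hb ha hcb hba (by ring_nf; ring_nf at h; linarith)
        exact this.tail (permStep (((swap12 c b a).trans (swap23 b c a)).trans (swap12 b a c)))
end
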